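/- Vanishing of the Čech obstruction implies vanishing of the generalised topological obstruction: let S be an empirical model on a measurement scenario (X, M, G) whose maximal contexts are commutative monoids with compatible free G-actions (compatible on overlaps), and whose local sections are action homomorphisms. If a local section s₀ ∈ S(C₀) extends to a compatible family {r_C ∈ F_ℤS(C)}_{C∈M} of formal ℤ-linear combinations with r_{C₀} = 1·s₀ (i.e., the Čech obstruction vanishes), then s₀ extends to a global action homomorphism g : X → G, i.e., the splitting obstruction vanishes. -/

import Mathlib

/-- A commutative partial monoid: a partially defined (via `Option`) commutative,
associative addition with an identity element. -/
structure PCM (M : Type*) where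
  padd : M → M → Option M
  zero : M
  comm : ∀ a b, padd a b = padd b a
  zero_add : ∀ a, padd zero a = some a
  assoc_eq : ∀ a b c ab bc abc abc', padd a b = some ab → padd b c = some bc →
    padd ab c = some abc → padd a bc = some abc' → abc = abc'
  assoc_def : ∀ a b c ab ac bc, padd a b = some ab → padd a c = some ac →
    padd b c = some bc → (padd ab c).isSome ∧ (padd a bc).isSome

/-- A commutative group regarded as a (total) commutative partial monoid. -/
def PCM.ofAddCommGroup (G : Type*) [AddCommGroup G] : PCM G where
  padd a b := some (a + b)
  zero := 0
  comm a b := by show some (a + b) = some (b + a); rw [add_comm]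
  zero_add a := by show some (0 + a) = some a; rw [_root_.zero_add]
  assoc_eq a b c ab bc abc abc' h1 h2 h3 h4 := by
    simp only [Option.some.injEq] at h1 h2 h3 h4
    subst h1; subst h2; subst h3; subst h4; exact add_assoc a b c
  assoc_def a b c ab ac bc _ _ _ := ⟨rfl, rfl⟩

/-- A homomorphism of commutative partial monoids: preserves the identity and all
defined sums. -/
def PCM.IsHom {M N : Type*} (P : PCM M) (Q : PCM N) (h : M → N) : Prop :=
  h P.zero = Q.zero ∧ ∀ a b ab, P.padd a b = some ab → Q.padd (h a) (h b) = some (h ab)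

/-- A compatible action of a commutative group `G` on a commutative partial monoid:
a group action which is a homomorphism `G × M → M` of partial monoids. -/
structure PCMAction {M : Type*} (G : Type*) [AddCommGroup G] (P : PCM M) where
  θ : G → M → M
  act_zero : ∀ m, θ 0 m = m
  act_add : ∀ g g' m, θ (g + g') m = θ g (θ g' m)
  act_hom : ∀ g g' m m' mm', P.padd m m' = some mm' →
    P.padd (θ g m) (θ g' m') = some (θ (g + g') mm')

/-- A `G`-bundle over a commutative partial monoid `M`: a partial monoid `N` with a
free compatible `G`-action and a surjective homomorphism `j : N → M` whose fibers
are exactly the orbits of the action. -/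
structure PCMBundle {M N : Type*} (G : Type*) [AddCommGroup G] (P : PCM M) (Q : PCM N) where
  act : PCMAction G Q
  free : ∀ g g' n, act.θ g n = act.θ g' n → g = g'
  j : N → M
  j_surj : Function.Surjective j
  j_hom : PCM.IsHom Q P j
  fiber_orbit : ∀ n n', j n = j n' ↔ ∃ g, act.θ g n = n'

variable {M N G : Type*} [AddCommGroup G] {P : PCM M} {Q : PCM N}

/-- A left splitting of a bundle: a homomorphism `l : N → G` intertwining the bundle
action with the translation action of `G` on itself. -/
def PCMBundle.IsLeftSplitting (B : PCMBundle G P Q) (l : N → G) : Prop :=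
  Q.IsHom (PCM.ofAddCommGroup G) l ∧ ∀ g n, l (B.act.θ g n) = g + l n

/-- A right splitting of a bundle: a homomorphism `r : M → N` with `j ∘ r = id`. -/
def PCMBundle.IsRightSplitting (B : PCMBundle G P Q) (r : M → N) : Prop :=
  P.IsHom Q r ∧ ∀ m, B.j (r m) = m

/-- A trivialisation of a bundle: a homomorphism `h : N → G × M` (into the product
bundle) intertwining the actions and satisfying `π₂ ∘ h = j`. -/
def PCMBundle.IsTrivialisation (B : PCMBundle G P Q) (h : N → G × M) : Prop :=
  (h Q.zero = (0, P.zero)) ∧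
  (∀ a b ab, Q.padd a b = some ab →
    (h ab).1 = (h a).1 + (h b).1 ∧ P.padd (h a).2 (h b).2 = some ((h ab).2)) ∧
  (∀ g n, h (B.act.θ g n) = (g + (h n).1, (h n).2)) ∧
  (∀ n, (h n).2 = B.j n)

/-- Vanishing of the Čech obstruction implies vanishing of the generalised
topological (splitting) obstruction. Let `(X, Cov, G)` be a measurement scenario
whose set of measurements `X` carries a commutative partial monoid structure `P`
and a compatible free action `A` of the outcome group `G`, glued from commutative
monoid structures on the contexts of the cover `Cov` (each context contains `0`,
is closed under sums and under the action, sums are only defined within a common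
context, and the cover is a cover). Let `S` be an empirical model whose local
sections are action homomorphisms, `s₀ ∈ S(C₀)` a local section, and suppose the
Čech obstruction of `s₀` vanishes: there is a compatible family
`{r_C ∈ F_ℤ S(C)}_{C ∈ Cov}` of formal ℤ-linear combinations of local sections
with `r_{C₀} = 1 · s₀`. Then `s₀` extends to a global action homomorphism
`g : X → G`, i.e. the splitting obstruction vanishes. -/
theorem cech_vanishing_implies_splitting {X : Type*}
    (P : PCM X) (A : PCMAction G P)
    (hfree : ∀ (g g' : G) (x : X), A.θ g x = A.θ g' x → g = g')
    (Cov : Set (Set X))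
    (hzero : ∀ C ∈ Cov, P.zero ∈ C)
    (htotal : ∀ C ∈ Cov, ∀ x ∈ C, ∀ x' ∈ C, ∃ m, P.padd x x' = some m ∧ m ∈ C)
    (hact : ∀ C ∈ Cov, ∀ x ∈ C, ∀ g : G, A.θ g x ∈ C)
    (hcover : ∀ x : X, ∃ C ∈ Cov, x ∈ C)
    (hglue : ∀ x x' m, P.padd x x' = some m → ∃ C ∈ Cov, x ∈ C ∧ x' ∈ C)
    (S : (C : Set X) → Set (C → G))
    (hhom : ∀ C ∈ Cov, ∀ s ∈ S C,
      (∀ hz : P.zero ∈ C, s ⟨P.zero, hz⟩ = 0) ∧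
      (∀ (x x' : C) (m : X) (hm : m ∈ C), P.padd x.1 x'.1 = some m →
        s ⟨m, hm⟩ = s x + s x') ∧
      (∀ (x : C) (g : G) (h : A.θ g x.1 ∈ C), s ⟨A.θ g x.1, h⟩ = g + s x))
    (C₀ : Set X) (hC₀ : C₀ ∈ Cov) (s₀ : C₀ → G) (hs₀ : s₀ ∈ S C₀)
    (r : (C : Set X) → ((C → G) →₀ ℤ))
    (hsupp : ∀ C ∈ Cov, ∀ s, r C s ≠ 0 → s ∈ S C)
    (hcompat : ∀ C ∈ Cov, ∀ C' ∈ Cov,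
      Finsupp.mapDomain
        (fun s : ↥C → G => fun x : ↥(C ∩ C') => s ⟨x.1, x.2.1⟩)
        (r C) =
      Finsupp.mapDomain
        (fun s : ↥C' → G => fun x : ↥(C ∩ C') => s ⟨x.1, x.2.2⟩)
        (r C'))
    (hr₀ : r C₀ = Finsupp.single s₀ 1) :
    ∃ g : X → G,
      (g P.zero = 0) ∧
      (∀ x x' m, P.padd x x' = some m → g m = g x + g x') ∧
      (∀ (x : X) (a : G), g (A.θ a x) = a + g x) ∧
      (∀ x : C₀, g x.1 = s₀ x) := by
  classical
  choose Cx hCxCov hxCx using hcover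
  -- well-definedness of the value at x across contexts
  have key : ∀ C, C ∈ Cov → ∀ C', C' ∈ Cov → ∀ (x : X) (hx : x ∈ C) (hx' : x ∈ C'),
      (r C).sum (fun s c => c • s ⟨x, hx⟩) = (r C').sum (fun s c => c • s ⟨x, hx'⟩) := by
    intro C hC C' hC' x hx hx'
    have h := hcompat C hC C' hC'
    have h2 := congrArg (fun l : (↥(C ∩ C') → G) →₀ ℤ =>
      l.sum (fun t c => c • t ⟨x, ⟨hx, hx'⟩⟩)) h
    have e1 := Finsupp.sum_mapDomain_index
      (f := fun s : ↥C → G => fun y : ↥(C ∩ C') => s ⟨y.1, y.2.1⟩) (s := r C)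
      (h := fun t c => c • t ⟨x, ⟨hx, hx'⟩⟩)
      (fun b => zero_smul ℤ _) (fun b m₁ m₂ => add_smul m₁ m₂ _)
    have e2 := Finsupp.sum_mapDomain_index
      (f := fun s : ↥C' → G => fun y : ↥(C ∩ C') => s ⟨y.1, y.2.2⟩) (s := r C')
      (h := fun t c => c • t ⟨x, ⟨hx, hx'⟩⟩)
      (fun b => zero_smul ℤ _) (fun b m₁ m₂ => add_smul m₁ m₂ _)
    rw [e1, e2] at h2
    exact h2
  -- total weight is 1 in each context
  have hwt : ∀ C, C ∈ Cov → (r C).sum (fun _ c => c) = 1 := by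
    intro C hC
    have h := hcompat C hC C₀ hC₀
    have h2 := congrArg (fun l : (↥(C ∩ C₀) → G) →₀ ℤ => l.sum (fun _ c => c)) h
    have e1 := Finsupp.sum_mapDomain_index
      (f := fun s : ↥C → G => fun y : ↥(C ∩ C₀) => s ⟨y.1, y.2.1⟩) (s := r C)
      (h := fun (_ : ↥(C ∩ C₀) → G) (c : ℤ) => c)
      (fun _ => rfl) (fun _ _ _ => rfl)
    have e2 := Finsupp.sum_mapDomain_index
      (f := fun s : ↥C₀ → G => fun y : ↥(C ∩ C₀) => s ⟨y.1, y.2.2⟩) (s := r C₀)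
      (h := fun (_ : ↥(C ∩ C₀) → G) (c : ℤ) => c)
      (fun _ => rfl) (fun _ _ _ => rfl)
    rw [e1, e2] at h2
    rw [h2, hr₀, Finsupp.sum_single_index rfl]
  refine ⟨fun x => (r (Cx x)).sum (fun s c => c • s ⟨x, hxCx x⟩), ?_, ?_, ?_, ?_⟩
  · -- zero
    beta_reduce
    apply Finset.sum_eq_zero
    intro s hs
    have hsS := hsupp _ (hCxCov P.zero) s (Finsupp.mem_support_iff.mp hs)
    beta_reduce
    rw [(hhom _ (hCxCov P.zero) s hsS).1 (hxCx P.zero), smul_zero]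
  · -- additivity
    intro x x' m hm
    beta_reduce
    obtain ⟨C, hC, hxC, hx'C⟩ := hglue x x' m hm
    obtain ⟨m', hm', hm'C⟩ := htotal C hC x hxC x' hx'C
    have hmm : m' = m := by rw [hm] at hm'; exact (Option.some.injEq _ _).mp hm'.symm
    subst hmm
    rw [key _ (hCxCov m') _ hC m' (hxCx m') hm'C,
        key _ (hCxCov x) _ hC x (hxCx x) hxC,
        key _ (hCxCov x') _ hC x' (hxCx x') hx'C]
    rw [Finsupp.sum, Finsupp.sum, Finsupp.sum, ← Finset.sum_add_distrib]
    apply Finset.sum_congr rfl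
    intro s hs
    have hsS := hsupp _ hC s (Finsupp.mem_support_iff.mp hs)
    beta_reduce
    rw [(hhom _ hC s hsS).2.1 ⟨x, hxC⟩ ⟨x', hx'C⟩ m' hm'C hm, smul_add]
  · -- equivariance
    intro x a
    beta_reduce
    have hxC : x ∈ Cx x := hxCx x
    have hθ : A.θ a x ∈ Cx x := hact _ (hCxCov x) x hxC a
    rw [key _ (hCxCov (A.θ a x)) _ (hCxCov x) (A.θ a x) (hxCx _) hθ]
    have e : (r (Cx x)).sum (fun s c => c • s ⟨A.θ a x, hθ⟩)
        = (r (Cx x)).sum (fun s c => c • a + c • s ⟨x, hxC⟩) := by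
      apply Finset.sum_congr rfl
      intro s hs
      have hsS := hsupp _ (hCxCov x) s (Finsupp.mem_support_iff.mp hs)
      beta_reduce
      rw [(hhom _ (hCxCov x) s hsS).2.2 ⟨x, hxC⟩ a hθ, smul_add]
    rw [e, Finsupp.sum, Finset.sum_add_distrib, ← Finset.sum_smul]
    have hw := hwt _ (hCxCov x)
    rw [Finsupp.sum] at hw
    rw [hw, one_smul]
    rfl
  · -- extension
    intro x
    beta_reduce
    rw [key _ (hCxCov x.1) _ hC₀ x.1 (hxCx x.1) x.2, hr₀]
    have e := Finsupp.sum_single_index (a := s₀) (b := (1 : ℤ))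
      (h := fun s c => c • s ⟨x.1, x.2⟩) (zero_smul ℤ _)
    rw [e]
    exact (one_smul ℤ _).trans rfl
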